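/- arXiv:1706.09845 — 2 statements merged into one kernel-verified Lean document; each statement's English description precedes it below -/
import Mathlib

section
/- If R is a graded algebra with entropy H(R) = 1 + ε, and a, b ∈ ⊕_{i≤d} R_i generate a free subalgebra, then d ≥ 1 / log₂(1 + ε). -/
/-!
Words of length `n` in `a` and `b` lie in degree `≤ n d` and, since `a` and `b` generate a free
algebra, the `2 ^ n` of them are linearly independent. Hence `dim (⊕_{i ≤ n d} R_i) ≥ 2 ^ n`, so
along the subsequence `n d` the `n d`-th roots of these dimensions are at least `2 ^ (1 / d)`,
which therefore bounds the entropy `1 + ε` from below.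
-/

open Filter Module

namespace FreeAlgebra

variable {R X : Type*}

theorem basisFreeMonoid_apply [CommSemiring R] (w : FreeMonoid X) :
    basisFreeMonoid R X w = FreeMonoid.lift (ι R) w := by
  simp [basisFreeMonoid, equivMonoidAlgebraFreeMonoid]

theorem lift_freeMonoidLift_ι [CommSemiring R] {A : Type*} [Semiring A] [Algebra R A]
    (g : X → A) (w : FreeMonoid X) :
    lift R g (FreeMonoid.lift (ι R) w) = FreeMonoid.lift g w := by
  rw [← MonoidHom.coe_coe (lift R g), ← MonoidHom.comp_apply]
  exact DFunLike.congr_fun (FreeMonoid.hom_eq fun x => by simp) w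

theorem linearIndependent_freeMonoidLift [CommRing R] {A : Type*} [Ring A] [Algebra R A]
    {g : X → A} (hg : Function.Injective (lift R g)) :
    LinearIndependent R (fun w : FreeMonoid X => FreeMonoid.lift g w) := by
  simpa [Function.comp_def, basisFreeMonoid_apply, lift_freeMonoidLift_ι] using
    (basisFreeMonoid R X).linearIndependent.map' (lift R g).toLinearMap
      (LinearMap.ker_eq_bot.2 hg)

end FreeAlgebra

theorem SetLike.freeMonoidLift_mem_graded {S R X : Type*} [SetLike S R] [Monoid R]
    (F : ℕ → S) [SetLike.GradedMonoid F] {d : ℕ} {g : X → R} (hg : ∀ x, g x ∈ F d)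
    (w : FreeMonoid X) : FreeMonoid.lift g w ∈ F (w.length * d) := by
  simpa [FreeMonoid.lift_apply, FreeMonoid.length] using
    SetLike.list_prod_map_mem_graded (A := F) w.toList (fun _ => d) g fun x _ => hg x

section Filtration

variable {k A : Type*} [Field k] [Ring A] [Algebra k A] (𝒜 : ℕ → Submodule k A)

theorem SetLike.gradedMonoid_iSup_le [SetLike.GradedMonoid 𝒜] :
    SetLike.GradedMonoid fun n => ⨆ i ≤ n, 𝒜 i where
  one_mem := Submodule.mem_iSup_of_mem 0 <| Submodule.mem_iSup_of_mem le_rfl <|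
    SetLike.one_mem_graded 𝒜
  mul_mem m n x y hx hy := by
    refine (?_ : (⨆ i ≤ m, 𝒜 i) * (⨆ j ≤ n, 𝒜 j) ≤ ⨆ i ≤ m + n, 𝒜 i)
      (Submodule.mul_mem_mul hx hy)
    simp only [Submodule.iSup_mul, Submodule.mul_iSup, iSup_le_iff]
    intro j hj i hi
    exact (Submodule.mul_le.2 fun x hx y hy => SetLike.mul_mem_graded hx hy).trans <|
      le_iSup₂_of_le (i + j) (add_le_add hi hj) le_rfl

theorem finiteDimensional_iSup_le [∀ i, FiniteDimensional k (𝒜 i)] (n : ℕ) :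
    FiniteDimensional k ↥(⨆ i ≤ n, 𝒜 i) := by
  rw [iSup_subtype']
  infer_instance

end Filtration

theorem card_pow_le_finrank_of_injective_lift {k A X : Type*} [Field k] [Ring A] [Algebra k A]
    [Fintype X] (F : ℕ → Submodule k A) [SetLike.GradedMonoid F] {d : ℕ} {g : X → A}
    (hg : ∀ x, g x ∈ F d) (hfree : Function.Injective (FreeAlgebra.lift k g)) (n : ℕ)
    [FiniteDimensional k (F (n * d))] :
    Fintype.card X ^ n ≤ finrank k (F (n * d)) := by
  let word (v : List.Vector X n) : FreeMonoid X := FreeMonoid.ofList v.toList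
  have hword : word.Injective := fun v w h => List.Vector.eq _ _ (FreeMonoid.ofList.injective h)
  let v (c : List.Vector X n) : F (n * d) :=
    ⟨FreeMonoid.lift g (word c), by
      simpa [word, FreeMonoid.length] using SetLike.freeMonoidLift_mem_graded F hg (word c)⟩
  have hv : LinearIndependent k v :=
    .of_comp (F _).subtype ((FreeAlgebra.linearIndependent_freeMonoidLift hfree).comp _ hword)
  simpa using hv.fintype_card_le_finrank

theorem frequently_rpow_inv_le_of_pow_le {N : ℕ → ℝ} {c : ℝ} (hc : 0 ≤ c) {d : ℕ} (hd : 0 < d)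
    (h : ∀ n, c ^ n ≤ N (n * d)) : ∃ᶠ m in atTop, c ^ (d : ℝ)⁻¹ ≤ N m ^ (m : ℝ)⁻¹ := by
  refine frequently_atTop.2 fun M =>
    ⟨(M + 1) * d, (Nat.le_mul_of_pos_right _ hd).trans' M.le_succ, ?_⟩
  calc c ^ (d : ℝ)⁻¹ = (c ^ (M + 1)) ^ (((M + 1) * d : ℕ) : ℝ)⁻¹ := by
        rw [← Real.rpow_natCast c, ← Real.rpow_mul hc]
        congr 1
        push_cast
        field_simp
    _ ≤ N ((M + 1) * d) ^ (((M + 1) * d : ℕ) : ℝ)⁻¹ :=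
        Real.rpow_le_rpow (pow_nonneg hc _) (h _) (by positivity)

/-- The `limsup` of a real function that is unbounded above is the junk value `0`. -/
theorem Real.le_limsup_of_frequently_le_of_ne_zero {ι : Type*} {f : Filter ι} {u : ι → ℝ}
    {c : ℝ} (hu : ∃ᶠ x in f, c ≤ u x) (h0 : limsup u f ≠ 0) : c ≤ limsup u f :=
  le_limsup_of_frequently_le hu <| by
    by_contra h
    exact h0 (Real.limsup_of_not_isBoundedUnder h)

/-- If `R` is a graded algebra with entropy `H(R) = 1 + ε`, and `a, b` lie in
`⊕_{i ≤ d} R_i` and generate a free subalgebra, then `d ≥ 1 / log₂ (1 + ε)`. -/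
theorem stmt0 {k A : Type*} [Field k] [Ring A] [Algebra k A]
    (𝒜 : ℕ → Submodule k A) [GradedAlgebra 𝒜]
    (hfin : ∀ i, FiniteDimensional k (𝒜 i))
    (ε : ℝ) (hε : 0 < ε)
    (hH : Filter.limsup
        (fun n : ℕ => ((Module.finrank k ↥(⨆ i ≤ n, 𝒜 i) : ℝ)) ^ ((n : ℝ)⁻¹))
        Filter.atTop = 1 + ε)
    (d : ℕ) (a b : A)
    (ha : a ∈ ⨆ i ≤ d, 𝒜 i) (hb : b ∈ ⨆ i ≤ d, 𝒜 i)
    (hfree : Function.Injective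
      ((FreeAlgebra.lift k (fun t : Bool => if t then a else b)) :
        FreeAlgebra k Bool →ₐ[k] A)) :
    (d : ℝ) ≥ 1 / Real.logb 2 (1 + ε) := by
  have := SetLike.gradedMonoid_iSup_le 𝒜
  have := finiteDimensional_iSup_le 𝒜
  have hdim (n : ℕ) : 2 ^ n ≤ finrank k ↥(⨆ i ≤ n * d, 𝒜 i) :=
    card_pow_le_finrank_of_injective_lift (fun n => ⨆ i ≤ n, 𝒜 i)
      (fun t => by cases t <;> assumption) hfree n
  have hd : 0 < d := Nat.pos_of_ne_zero fun hd0 => by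
    have h := hdim (finrank k ↥(⨆ i ≤ 0, 𝒜 i))
    rw [hd0, mul_zero] at h
    exact h.not_gt Nat.lt_two_pow_self
  have h2d : (2 : ℝ) ^ (d : ℝ)⁻¹ ≤ 1 + ε :=
    hH ▸ Real.le_limsup_of_frequently_le_of_ne_zero
      (frequently_rpow_inv_le_of_pow_le zero_le_two hd fun n => mod_cast hdim n)
      (by linarith)
  have hlog : (d : ℝ)⁻¹ ≤ Real.logb 2 (1 + ε) :=
    (Real.le_logb_iff_rpow_le one_lt_two (by linarith)).2 h2d
  rw [ge_iff_le, one_div_le (hlog.trans_lt' (by positivity)) (by positivity), one_div]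
  exact hlog
end

section
/- Suppose W(1) is a set of d letters, and for each i, W(2^{i+1}) = C(2^i)·W(2^i) with C(2^i) ⊆ W(2^i). Then every word u of length 2^{i+1} that is a factor of some word in ⋃_j W(2^j) of length ≥ 2^{i+2} can be written such that any aligned length-2^{i+1} block lies in C(2^i)W(2^i) ∪ W(2^i)C(2^i). -/
/-!
Induct on the level `j` of the word `u = c ++ v ∈ W (j + 1)`, where `c ∈ C j` and `v ∈ W j`.
An aligned block of length `2^(i+1)` lies inside `c` or inside `v`, where induction applies,
or straddles the boundary. In the last case alignment forces it to consist of the last `2^i`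
letters of `c`, a word of `W i`, followed by the first `2^i` letters of `v`, a word of `C i`:
unfolding the recursion, every word of `W n` ends with a word of `W i` for `i ≤ n` and begins
with a word of `C i` for `i < n`.
-/

open List

theorem add_eq_of_dvd_of_lt_of_lt_add_two_mul {n s m : ℕ} (hs : n ∣ s) (hm : n ∣ m)
    (h₁ : s < m) (h₂ : m < s + 2 * n) : s + n = m := by
  obtain ⟨a, rfl⟩ := hs
  obtain ⟨b, rfl⟩ := hm
  have hab : a < b := Nat.lt_of_mul_lt_mul_left h₁
  have hba : b < a + 2 := Nat.lt_of_mul_lt_mul_left (a := n) (by linarith)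
  obtain rfl : b = a + 1 := by omega
  ring

theorem List.take_drop_append_of_add_le_length {α : Type*} {l₁ l₂ : List α} {s n : ℕ}
    (h : s + n ≤ l₁.length) : ((l₁ ++ l₂).drop s).take n = (l₁.drop s).take n := by
  rw [drop_append_of_le_length (by omega), take_append_of_le_length (by rw [length_drop]; omega)]

theorem List.drop_append_of_length_le {α : Type*} {l₁ l₂ : List α} {s : ℕ}
    (h : l₁.length ≤ s) : (l₁ ++ l₂).drop s = l₂.drop (s - l₁.length) := by
  rw [drop_append, drop_eq_nil_of_le h, nil_append]

section

variable {X : Type*} (W C : ℕ → Set (List X))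

theorem exists_mem_isSuffix_of_mem
    (hrec : ∀ i, W (i + 1) = {l : List X | ∃ c ∈ C i, ∃ v ∈ W i, l = c ++ v})
    {i n : ℕ} (hin : i ≤ n) {u : List X} (hu : u ∈ W n) : ∃ w ∈ W i, w <:+ u := by
  induction n, hin using Nat.le_induction generalizing u with
  | base => exact ⟨u, hu, suffix_refl u⟩
  | succ n _ ih =>
    rw [hrec] at hu
    obtain ⟨c, -, v, hv, rfl⟩ := hu
    obtain ⟨w, hw, hwv⟩ := ih hv
    exact ⟨w, hw, hwv.trans (suffix_append c v)⟩

theorem exists_mem_isPrefix_of_mem (hC : ∀ i, C i ⊆ W i)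
    (hrec : ∀ i, W (i + 1) = {l : List X | ∃ c ∈ C i, ∃ v ∈ W i, l = c ++ v})
    {i n : ℕ} (hin : i + 1 ≤ n) {u : List X} (hu : u ∈ W n) : ∃ c ∈ C i, c <+: u := by
  induction n, hin using Nat.le_induction generalizing u with
  | base =>
    rw [hrec] at hu
    obtain ⟨c, hc, v, -, rfl⟩ := hu
    exact ⟨c, hc, prefix_append c v⟩
  | succ n _ ih =>
    rw [hrec] at hu
    obtain ⟨c', hc', v, -, rfl⟩ := hu
    obtain ⟨c, hc, hcc'⟩ := ih (hC n hc')
    exact ⟨c, hc, hcc'.trans (prefix_append c' v)⟩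

theorem aligned_block_mem_of_mem (hlen : ∀ i, ∀ l ∈ W i, l.length = 2 ^ i)
    (hC : ∀ i, C i ⊆ W i)
    (hrec : ∀ i, W (i + 1) = {l : List X | ∃ c ∈ C i, ∃ v ∈ W i, l = c ++ v})
    {i j : ℕ} (hij : i + 1 ≤ j) {u : List X} (hu : u ∈ W j)
    {s : ℕ} (hs : 2 ^ i ∣ s) (hfit : s + 2 ^ (i + 1) ≤ u.length) :
    ∃ a b : List X,
      ((a ∈ C i ∧ b ∈ W i) ∨ (a ∈ W i ∧ b ∈ C i)) ∧
      (u.drop s).take (2 ^ (i + 1)) = a ++ b := by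
  induction j, hij using Nat.le_induction generalizing u s with
  | base =>
    have hcv := hlen _ u hu
    rw [hrec] at hu
    obtain ⟨c, hc, v, hv, rfl⟩ := hu
    obtain rfl : s = 0 := by omega
    exact ⟨c, v, .inl ⟨hc, hv⟩, by rw [drop_zero, take_of_length_le hcv.le]⟩
  | succ n hin ih =>
    rw [hrec] at hu
    obtain ⟨c, hc, v, hv, rfl⟩ := hu
    have hcW := hC n hc
    have hcl : c.length = 2 ^ n := hlen n c hcW
    rw [length_append, hlen n v hv] at hfit
    rcases le_or_gt (s + 2 ^ (i + 1)) c.length with hleft | hleft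
    · obtain ⟨a, b, hab, heq⟩ := ih hcW hs hleft
      exact ⟨a, b, hab, by rw [take_drop_append_of_add_le_length hleft, heq]⟩
    have hdvd : 2 ^ i ∣ c.length := hcl ▸ pow_dvd_pow 2 (by omega)
    rcases le_or_gt c.length s with hright | hmid
    · obtain ⟨a, b, hab, heq⟩ := ih hv (Nat.dvd_sub hs hdvd) (by rw [hlen n v hv]; omega)
      exact ⟨a, b, hab, by rw [drop_append_of_length_le hright, heq]⟩
    obtain ⟨w, hw, p, rfl⟩ := exists_mem_isSuffix_of_mem W C hrec (by omega : i ≤ n) hcW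
    obtain ⟨c', hc', r, rfl⟩ := exists_mem_isPrefix_of_mem W C hC hrec hin hv
    have hwl := hlen i w hw
    have hc'l := hlen i c' (hC i hc')
    have hsp : s = p.length := by
      have := add_eq_of_dvd_of_lt_of_lt_add_two_mul hs hdvd hmid (by rw [← pow_succ']; omega)
      rw [length_append, hwl] at this
      omega
    refine ⟨w, c', .inr ⟨hw, hc'⟩, ?_⟩
    rw [hsp, show 2 ^ (i + 1) = (w ++ c').length by simp [hwl, hc'l, pow_succ, mul_two],
      append_assoc, drop_left, ← append_assoc, take_left]

end

theorem stmt18_general {X : Type*} (W C : ℕ → Set (List X))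
    (hlen : ∀ i, ∀ l ∈ W i, l.length = 2 ^ i)
    (hC : ∀ i, C i ⊆ W i)
    (hrec : ∀ i, W (i + 1) = {l : List X | ∃ c ∈ C i, ∃ v ∈ W i, l = c ++ v})
    (i j : ℕ) (u : List X) (hu : u ∈ W j)
    (s : ℕ) (hs : 2 ^ i ∣ s) (hfit : s + 2 ^ (i + 1) ≤ u.length) :
    ∃ a b : List X,
      ((a ∈ C i ∧ b ∈ W i) ∨ (a ∈ W i ∧ b ∈ C i)) ∧
      (u.drop s).take (2 ^ (i + 1)) = a ++ b := by
  have hij : i + 1 ≤ j := by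
    have h : 2 ^ (i + 1) ≤ 2 ^ j := by rw [← hlen j u hu]; omega
    exact (Nat.pow_le_pow_iff_right (by norm_num)).mp h
  exact aligned_block_mem_of_mem W C hlen hC hrec hij hu hs hfit

/-- Block structure of the Bartholdi–Smoktunowicz construction: if
`W (i+1) = C i · W i` with `C i ⊆ W i` and words in `W i` have length `2^i`,
then any length-`2^(i+1)` block of a word of `⋃ⱼ W j` of length at least
`2^(i+2)`, starting at a position divisible by `2^i`, lies in
`C i · W i ∪ W i · C i`. -/
theorem stmt18 {X : Type*} (W C : ℕ → Set (List X))
    (hlen : ∀ i, ∀ l ∈ W i, l.length = 2 ^ i)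
    (hC : ∀ i, C i ⊆ W i)
    (hrec : ∀ i, W (i + 1) = {l : List X | ∃ c ∈ C i, ∃ v ∈ W i, l = c ++ v})
    (i j : ℕ) (u : List X) (hu : u ∈ W j) (hlong : 2 ^ (i + 2) ≤ u.length)
    (s : ℕ) (hs : 2 ^ i ∣ s) (hfit : s + 2 ^ (i + 1) ≤ u.length) :
    ∃ a b : List X,
      ((a ∈ C i ∧ b ∈ W i) ∨ (a ∈ W i ∧ b ∈ C i)) ∧
      (u.drop s).take (2 ^ (i + 1)) = a ++ b :=
  stmt18_general W C hlen hC hrec i j u hu s hs hfit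
end
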